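/- Under the congruence generated by the n-Catalan equations, any two terms t₁, t₂ over one n-ary symbol ⊗ with the same underlying variable list satisfy t₁ =_{C_n} t₂. -/

import Mathlib

/-- Terms of the free algebra over variable set `V` with one n-ary operation ⊗. -/
inductive CTerm (n : ℕ) (V : Type*) : Type _
  | var (v : V) : CTerm n V
  | op (f : Fin n → CTerm n V) : CTerm n V

/-- `brk i x` is the term ⊗(x₀,…,x_{i-1}, ⊗(x_i,…,x_{i+n-1}), x_{i+n},…,x_{2n-2}):
the n-ary tensor of the entries of `x` with one inner ⊗ placed at (0-based) position
`i`.  The Catalan rule α_i rewrites `brk i x` to `brk (i-1) x` for `0 < i < n`. -/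
def brk {n : ℕ} {V : Type*} (i : ℕ) (x : ℕ → CTerm n V) : CTerm n V :=
  .op fun j => if (j : ℕ) < i then x (j : ℕ)
    else if (j : ℕ) = i then .op (fun k : Fin n => x (i + (k : ℕ)))
    else x ((j : ℕ) + n - 1)

/-- One rewrite step of the Catalan rewriting system: a rule
α_i : ⊗(x₁,…,x_i, ⊗(x_{i+1},…,x_{i+n}), x_{i+n+1},…,x_{2n-1}) →
⊗(x₁,…,x_{i-1}, ⊗(x_i,…,x_{i+n-1}), x_{i+n},…,x_{2n-1}) (for 0 < i < n) applied at
some subterm position, with arbitrary terms substituted for the variables. -/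
inductive CStep {n : ℕ} {V : Type*} : CTerm n V → CTerm n V → Prop
  | rule (i : ℕ) (h1 : 0 < i) (h2 : i < n) (x : ℕ → CTerm n V) :
      CStep (brk i x) (brk (i - 1) x)
  | congr {f g : Fin n → CTerm n V} (i : Fin n) :
      CStep (f i) (g i) → (∀ j, j ≠ i → f j = g j) → CStep (.op f) (.op g)

/-- The underlying list of a term: its left-to-right sequence of variables. -/
def uList {n : ℕ} {V : Type*} : CTerm n V → List V
  | .var v => [v]
  | .op f => (List.ofFn fun i : Fin n => uList (f i)).flatten

/-- The smallest congruence on the free term algebra generated by all substitution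
instances of the n-Catalan equations applied at arbitrary subterm positions. -/
inductive CnEq {n : ℕ} {V : Type*} : CTerm n V → CTerm n V → Prop
  | base (i : ℕ) (h1 : 0 < i) (h2 : i < n) (x : ℕ → CTerm n V) :
      CnEq (brk i x) (brk (i - 1) x)
  | refl (t : CTerm n V) : CnEq t t
  | symm {s t : CTerm n V} : CnEq s t → CnEq t s
  | trans {s t u : CTerm n V} : CnEq s t → CnEq t u → CnEq s u
  | congr {f g : Fin n → CTerm n V} : (∀ i, CnEq (f i) (g i)) → CnEq (.op f) (.op g)

/-!
Every term is `C_n`-congruent to a left comb `⊗(⊗(⋯⊗(x, …)⋯), …)`, all of whose non-first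
arguments are variables, and a left comb is determined by its underlying list, which
`C_n`-congruence preserves. To reach a left comb, move an inner `⊗` standing at a non-first
argument of the root to the first argument by the rules `α_j, …, α_1`: this keeps the underlying
list and lengthens that of the first argument. Once all other arguments are variables, recurse
into the first one.
-/

theorem List.ofFn_val_eq_map_range {α : Type*} {n : ℕ} (g : ℕ → α) :
    List.ofFn (fun j : Fin n => g j) = (List.range n).map g :=
  List.ext_getElem (by simp) (by simp)

open CTerm

section

variable {n : ℕ} {V : Type*}

theorem uList_op (f : Fin n → CTerm n V) :
    uList (op f) = (List.ofFn fun i => uList (f i)).flatten := by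
  rw [uList]

theorem uList_ne_nil [NeZero n] (t : CTerm n V) : uList t ≠ [] := by
  induction t with
  | var v => simp [uList]
  | op f ih =>
    rw [uList_op, Ne, List.flatten_eq_nil_iff]
    simpa using ⟨0, ih 0⟩

theorem uList_brk {i : ℕ} (hi : i < n) (x : ℕ → CTerm n V) :
    uList (brk i x) = ((List.range (2 * n - 1)).map fun k => uList (x k)).flatten := by
  obtain ⟨r, hr⟩ : ∃ r, n = i + (1 + r) := ⟨n - 1 - i, by omega⟩
  have outer : List.range n = List.range i ++ i :: (List.range r).map (i + 1 + ·) := by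
    rw [hr, List.range_add, List.range_add]; simp [List.map_map, Function.comp_def, Nat.add_assoc]
  have whole : List.range (2 * n - 1) =
      List.range i ++ (List.range n).map (i + ·) ++ (List.range r).map (i + n + ·) := by
    rw [show 2 * n - 1 = i + (n + r) by omega, List.range_add, List.range_add]
    simp [List.map_map, Function.comp_def, Nat.add_assoc]
  rw [brk, uList_op, List.ofFn_val_eq_map_range (fun j => uList (if j < i then x j else if j = i then
    op (fun k : Fin n => x (i + k)) else x (j + n - 1))), outer, whole]
  simp only [List.map_append, List.map_cons, List.map_map, List.flatten_append, List.flatten_cons,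
    lt_irrefl, if_false, if_true, uList_op, List.ofFn_val_eq_map_range (fun k => uList (x (i + k))),
    List.append_assoc, Function.comp_def]
  refine congrArg₂ (· ++ ·) (congrArg _ (List.map_congr_left fun k hk => ?_))
    (congrArg (_ ++ ·) (congrArg _ (List.map_congr_left fun k _ => ?_)))
  · rw [if_pos (List.mem_range.mp hk)]
  · rw [if_neg (by omega), if_neg (by omega), show i + 1 + k + n - 1 = i + n + k by omega]

theorem CnEq.uList_eq {s t : CTerm n V} (h : CnEq s t) : uList s = uList t := by
  induction h with
  | base i _ hi x => rw [uList_brk hi, uList_brk (by omega)]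
  | refl => rfl
  | symm _ ih => exact ih.symm
  | trans _ _ ih₁ ih₂ => exact ih₁.trans ih₂
  | congr _ ih => simp only [uList_op, ih]

theorem op_eq_brk {f g : Fin n → CTerm n V} {j : Fin n} (hg : f j = op g) {x : ℕ → CTerm n V}
    (hlt : ∀ k : Fin n, k < j → x k = f k) (hmid : ∀ k : Fin n, x (j + k) = g k)
    (hgt : ∀ k : Fin n, j < k → x (k + n - 1) = f k) : op f = brk j x := by
  rw [brk]
  congr 1
  funext k
  split_ifs with h₁ h₂
  · exact (hlt k h₁).symm
  · rw [Fin.ext h₂, hg]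
    exact congrArg op (funext fun k => (hmid k).symm)
  · exact (hgt k (by omega)).symm

theorem cnEq_brk_zero {i : ℕ} (hi : i < n) (x : ℕ → CTerm n V) : CnEq (brk i x) (brk 0 x) := by
  induction i with
  | zero => exact .refl _
  | succ i ih => exact (CnEq.base (i + 1) i.succ_pos hi x).trans (ih (by omega))

section Comb

variable {m : ℕ}

theorem uList_op_succ (f : Fin (m + 2) → CTerm (m + 2) V) :
    uList (op f) = uList (f 0) ++ (List.ofFn fun i => uList (f i.succ)).flatten := by
  rw [uList_op, List.ofFn_succ, List.flatten_cons]

theorem length_uList_zero_lt (f : Fin (m + 2) → CTerm (m + 2) V) :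
    (uList (f 0)).length < (uList (op f)).length := by
  rw [uList_op_succ, List.length_append, List.ofFn_succ, List.flatten_cons, List.length_append]
  have := List.length_pos_of_ne_nil (uList_ne_nil (f (0 : Fin (m + 1)).succ))
  omega

theorem brk_zero (x : ℕ → CTerm (m + 2) V) :
    brk 0 x = op (Fin.cons (op fun k => x k) fun i => x (i + (m + 2))) := by
  rw [brk]
  congr 1
  funext k
  induction k using Fin.cases with
  | zero => simp
  | succ i => simp [Fin.val_succ, show (i : ℕ) + 1 + (m + 2) - 1 = i + (m + 2) by omega]

theorem exists_cnEq_op_of_eq_op {f g : Fin (m + 2) → CTerm (m + 2) V} {j : Fin (m + 1)}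
    (hg : f j.succ = op g) :
    ∃ f', CnEq (op f) (op f') ∧ (uList (f 0)).length < (uList (f' 0)).length := by
  -- the arguments of `op f` with `f j.succ` unfolded into `g`; `brk` never reads the last branch
  let x : ℕ → CTerm (m + 2) V := fun k =>
    if h : k ≤ j then f ⟨k, by omega⟩
    else if h' : k ≤ j + (m + 2) then g ⟨k - (j + 1), by omega⟩
    else if h'' : k + 1 - (m + 2) < m + 2 then f ⟨k + 1 - (m + 2), h''⟩ else f 0
  have hx : op f = brk (j + 1) x := by
    refine op_eq_brk hg (fun k hk => ?_) (fun k => ?_) (fun k hk => ?_)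
    · simp [x, show (k : ℕ) ≤ j by simp [Fin.lt_def] at hk; omega]
    · simp [x, show ¬ (j : ℕ) + 1 + k ≤ j by omega, show (j : ℕ) + 1 + k ≤ j + (m + 2) by omega]
    · have hk' : (j : ℕ) + 1 < k := hk
      simp [x, show ¬ (k : ℕ) + (m + 1) ≤ j by omega, show ¬ (k : ℕ) + (m + 1) ≤ j + (m + 2) by omega]
  have hrot := cnEq_brk_zero (i := j + 1) (by omega) x
  rw [← hx, brk_zero] at hrot
  refine ⟨_, hrot, ?_⟩
  have hx0 : x ((0 : Fin (m + 2)) : ℕ) = f 0 := by simp [x]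
  simpa only [Fin.cons_zero, hx0] using length_uList_zero_lt fun k => x k

theorem one_lt_length_uList_op (f : Fin (m + 2) → CTerm (m + 2) V) :
    1 < (uList (op f)).length := by
  have := List.length_pos_of_ne_nil (uList_ne_nil (f 0))
  have := length_uList_zero_lt f
  omega

inductive IsLeftComb : CTerm (m + 2) V → Prop
  | var (v : V) : IsLeftComb (var v)
  | op {a : CTerm (m + 2) V} (vs : Fin (m + 1) → V) :
      IsLeftComb a → IsLeftComb (op (Fin.cons a fun i => var (vs i)))

theorem uList_op_cons_var (a : CTerm (m + 2) V) (vs : Fin (m + 1) → V) :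
    uList (op (Fin.cons a fun i => var (vs i))) = uList a ++ List.ofFn vs := by
  simpa [uList_op_succ, uList, List.flatMap_def, List.map_ofFn, Function.comp_def] using
    List.flatMap_singleton' (List.ofFn vs)

theorem IsLeftComb.eq_of_uList_eq {s t : CTerm (m + 2) V} (hs : IsLeftComb s)
    (ht : IsLeftComb t) (h : uList s = uList t) : s = t := by
  induction hs generalizing t with
  | var v =>
    cases ht with
    | var w => simpa [uList] using h
    | @op b ws _ =>
      have := one_lt_length_uList_op (Fin.cons b fun i => CTerm.var (ws i))
      rw [← h] at this
      simp [uList] at this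
  | @op a vs _ ih =>
    cases ht with
    | var w =>
      have := one_lt_length_uList_op (Fin.cons a fun i => CTerm.var (vs i))
      rw [h] at this
      simp [uList] at this
    | op ws hb =>
      rw [uList_op_cons_var, uList_op_cons_var] at h
      obtain ⟨h₁, h₂⟩ := List.append_inj' h (by simp)
      rw [ih hb h₁, List.ofFn_injective h₂]

def headLength : CTerm (m + 2) V → ℕ
  | var _ => 0
  | op f => (uList (f 0)).length

theorem exists_isLeftComb_cnEq : ∀ t : CTerm (m + 2) V, ∃ e, IsLeftComb e ∧ CnEq t e
  | var v => ⟨var v, .var v, .refl _⟩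
  | op f => by
    by_cases hf : ∃ j : Fin (m + 1), ∃ g, f j.succ = op g
    · obtain ⟨j, g, hg⟩ := hf
      obtain ⟨f', hff', hlen⟩ := exists_cnEq_op_of_eq_op hg
      have hsame := hff'.uList_eq
      obtain ⟨e, he, hf'e⟩ := exists_isLeftComb_cnEq (op f')
      exact ⟨e, he, hff'.trans hf'e⟩
    · have hvar : ∀ j : Fin (m + 1), ∃ v, f j.succ = var v := fun j => by
        cases h : f j.succ with
        | var v => exact ⟨v, rfl⟩
        | op g => exact (hf ⟨j, g, h⟩).elim
      choose vs hvs using hvar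
      obtain ⟨e, he, hfe⟩ := exists_isLeftComb_cnEq (f 0)
      refine ⟨_, he.op vs, CnEq.congr fun i => ?_⟩
      induction i using Fin.cases with
      | zero => simpa using hfe
      | succ i => simpa [hvs i] using CnEq.refl _
-- each step either shrinks the term or keeps its list and lengthens that of the first argument
termination_by t => ((uList t).length, (uList t).length - headLength t)
decreasing_by
  · rw [hsame]
    refine Prod.Lex.right _ ?_
    have := length_uList_zero_lt f'
    simp only [headLength]
    omega
  · exact Prod.Lex.left _ _ (length_uList_zero_lt f)

end Comb

end

/-- any two terms with the same underlying variable list are congruent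
modulo the n-Catalan equations. -/
theorem stmt_13 {n : ℕ} (hn : 2 ≤ n) {V : Type*} (t₁ t₂ : CTerm n V)
    (h : uList t₁ = uList t₂) : CnEq t₁ t₂ := by
  obtain ⟨m, rfl⟩ : ∃ m, n = m + 2 := ⟨n - 2, by omega⟩
  obtain ⟨e₁, he₁, h₁⟩ := exists_isLeftComb_cnEq t₁
  obtain ⟨e₂, he₂, h₂⟩ := exists_isLeftComb_cnEq t₂
  have he : e₁ = e₂ := he₁.eq_of_uList_eq he₂ (by rw [← h₁.uList_eq, ← h₂.uList_eq, h])
  exact h₁.trans (he ▸ h₂.symm)
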